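/- arXiv:2603.07210 — 2 statements merged into one kernel-verified Lean document; each statement's English description precedes it below -/
import Mathlib

section
/- Let T be a tensor field of type (2,2) on ℂⁿ such that L_F T = 0 for every analytic vector field F on ℂⁿ. Then there exist constants c₁, c₂ ∈ ℂ such that T^{i₁ i₂}_{j₁ j₂} = c₁·δ^{i₁}_{j₁}δ^{i₂}_{j₂} + c₂·δ^{i₁}_{j₂}δ^{i₂}_{j₁} for all i₁, i₂, j₁, j₂ ∈ {1,…,n}, where δ^i_j is the Kronecker symbol. -/
open scoped BigOperators

/-- Partial derivative of `f : ℂⁿ → ℂ` in the `s`-th coordinate direction at `x`. -/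
noncomputable def pderivC {n : ℕ} (f : (Fin n → ℂ) → ℂ) (s : Fin n) (x : Fin n → ℂ) : ℂ :=
  fderiv ℂ f x (Pi.single s 1)

/-- Components of the Lie derivative `L_F T` of a type-`(p,q)` tensor field `T` on `ℂⁿ`
along the vector field `F`. -/
noncomputable def lieDeriv {n p q : ℕ} (F : Fin n → (Fin n → ℂ) → ℂ)
    (T : (Fin p → Fin n) → (Fin q → Fin n) → (Fin n → ℂ) → ℂ)
    (i : Fin p → Fin n) (j : Fin q → Fin n) (x : Fin n → ℂ) : ℂ :=
  (∑ s, F s x * pderivC (T i j) s x)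
    + ∑ a : Fin q, ∑ k, T i (Function.update j a k) x * pderivC (F k) (j a) x
    - ∑ b : Fin p, ∑ l, T (Function.update i b l) j x * pderivC (F (i b)) l x

/-- Kronecker delta on `Fin n`, valued in `ℂ`. -/
noncomputable def kron {n : ℕ} (a b : Fin n) : ℂ := if a = b then 1 else 0

/-! Constant vector fields give `∂_K T = 0`, so `T` is constant. The linear fields `x^M ∂_K` then
say that this constant tensor is annihilated by every elementary matrix `E_{KM}` of `gl_n`. With
`K = M` this forces `T^{ab}_{cd} = 0` unless `(c, d)` is a rearrangement of `(a, b)`; the other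
equations make `T^{ab}_{ab}` and `T^{ab}_{ba}` (`a ≠ b`) independent of `a, b`, and `T^{aa}_{aa}`
their sum. -/

open Finset Function

theorem eq_of_pderivC_eq_zero {n : ℕ} {f : (Fin n → ℂ) → ℂ} (hf : Differentiable ℂ f)
    (h : ∀ s x, pderivC f s x = 0) (x y : Fin n → ℂ) : f x = f y := by
  refine is_const_of_fderiv_eq_zero hf (fun z => ?_) x y
  refine ContinuousLinearMap.coe_injective (LinearMap.pi_ext fun s c => ?_)
  have hc : Pi.single s c = c • Pi.single s (1 : ℂ) := by
    rw [← Pi.single_smul, smul_eq_mul, mul_one]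
  have hs := h s z
  rw [pderivC] at hs
  simp [hc, hs]

theorem pderivC_const {n : ℕ} (c : ℂ) (s : Fin n) (x : Fin n → ℂ) :
    pderivC (fun _ => c) s x = 0 := by
  simp [pderivC]

theorem pderivC_apply {n : ℕ} (M s : Fin n) (x : Fin n → ℂ) :
    pderivC (fun y => y M) s x = if s = M then 1 else 0 := by
  have hM : fderiv ℂ (fun y : Fin n → ℂ => y M) x = ContinuousLinearMap.proj M :=
    (ContinuousLinearMap.proj (R := ℂ) (φ := fun _ : Fin n => ℂ) M).fderiv
  simp [pderivC, hM, Pi.single_apply, eq_comm]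

theorem lieDeriv_const_single {n p q : ℕ} (K : Fin n)
    (T : (Fin p → Fin n) → (Fin q → Fin n) → (Fin n → ℂ) → ℂ)
    (i : Fin p → Fin n) (j : Fin q → Fin n) (x : Fin n → ℂ) :
    lieDeriv (fun s _ => (Pi.single K 1 : Fin n → ℂ) s) T i j x = pderivC (T i j) K x := by
  simp [lieDeriv, pderivC_const, Pi.single_apply]

def linearField {n : ℕ} (K M : Fin n) : Fin n → (Fin n → ℂ) → ℂ :=
  fun s y => if s = K then y M else 0

theorem analyticOnNhd_linearField {n : ℕ} (K M s : Fin n) :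
    AnalyticOnNhd ℂ (linearField K M s) Set.univ := by
  unfold linearField
  split_ifs
  · exact fun y _ => (ContinuousLinearMap.proj M : (Fin n → ℂ) →L[ℂ] ℂ).analyticAt y
  · exact analyticOnNhd_const

theorem pderivC_linearField {n : ℕ} (K M k l : Fin n) (y : Fin n → ℂ) :
    pderivC (linearField K M k) l y = if k = K then (if l = M then 1 else 0) else 0 := by
  unfold linearField
  by_cases hk : k = K <;> simp [hk, pderivC_apply, pderivC_const]

theorem lieDeriv_linearField_zero {n p q : ℕ} (K M : Fin n)
    (T : (Fin p → Fin n) → (Fin q → Fin n) → (Fin n → ℂ) → ℂ)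
    (i : Fin p → Fin n) (j : Fin q → Fin n) :
    lieDeriv (linearField K M) T i j 0 =
      ∑ a, (if j a = M then T i (update j a K) 0 else 0)
        - ∑ b, (if i b = K then T (update i b M) j 0 else 0) := by
  simp [lieDeriv, pderivC_linearField, linearField, mul_ite, Finset.sum_ite_eq']

theorem eq_of_symm_of_eq_right {α β : Type*} {f : α → α → β}
    (hsymm : ∀ a b, a ≠ b → f b a = f a b) (hright : ∀ a b c, a ≠ b → a ≠ c → f a b = f a c)
    {a b u v : α} (hab : a ≠ b) (huv : u ≠ v) : f a b = f u v := by
  by_cases hav : a = v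
  · subst hav
    rw [hright a b u hab huv.symm, hsymm u a huv]
  · rw [hright a b v hab hav, ← hsymm a v hav, hright v a u (Ne.symm hav) huv.symm, hsymm u v huv]

theorem update_vecCons_two_zero {α : Type*} (x y z : α) : update ![x, y] 0 z = ![z, y] := by
  ext k; fin_cases k <;> rfl

theorem update_vecCons_two_one {α : Type*} (x y z : α) : update ![x, y] 1 z = ![x, z] := by
  ext k; fin_cases k <;> rfl

theorem vecCons_two_eta {α : Type*} (x : Fin 2 → α) : ![x 0, x 1] = x := by
  ext k; fin_cases k <;> rfl

/-- The constant tensor `t` is annihilated by every elementary matrix `E_{KM}` of `gl_n`, acting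
as a derivation on the upper and lower indices. -/
def IsGLInvariant {n p q : ℕ} (t : (Fin p → Fin n) → (Fin q → Fin n) → ℂ) : Prop :=
  ∀ (K M : Fin n) i j, ∑ a, (if j a = M then t i (update j a K) else 0) =
    ∑ b, (if i b = K then t (update i b M) j else 0)

namespace IsGLInvariant

variable {n : ℕ}

theorem card_fiber_mul_eq {p q : ℕ} {t : (Fin p → Fin n) → (Fin q → Fin n) → ℂ}
    (ht : IsGLInvariant t) (i : Fin p → Fin n) (j : Fin q → Fin n) (r : Fin n) :
    (#{a | j a = r} : ℂ) * t i j = #{b | i b = r} * t i j := by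
  have h := ht r r i j
  have hsum : ∀ {m : ℕ} (k : Fin m → Fin n) (f : (Fin m → Fin n) → ℂ),
      ∑ a, (if k a = r then f (update k a r) else 0) = #{a | k a = r} * f k := by
    intro m k f
    rw [Finset.card_filter, Nat.cast_sum, Finset.sum_mul]
    refine Finset.sum_congr rfl fun a _ => ?_
    split_ifs with hka
    · rw [← hka, update_eq_self]; simp
    · simp
  rw [hsum j (t i), hsum i (t · j)] at h
  exact h

theorem map_univ_eq_of_ne_zero {p q : ℕ} {t : (Fin p → Fin n) → (Fin q → Fin n) → ℂ}
    (ht : IsGLInvariant t) {i : Fin p → Fin n} {j : Fin q → Fin n} (hij : t i j ≠ 0) :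
    univ.val.map j = univ.val.map i := by
  ext r
  have h := mul_right_cancel₀ hij (ht.card_fiber_mul_eq i j r)
  simp only [Multiset.count_map, ← Finset.filter_val, Finset.card_val, eq_comm (a := r)]
  exact_mod_cast h

variable {t : (Fin 2 → Fin n) → (Fin 2 → Fin n) → ℂ}

theorem eq_or_eq_swap_of_ne_zero (ht : IsGLInvariant t) {a b c d : Fin n}
    (h : t ![a, b] ![c, d] ≠ 0) : c = a ∧ d = b ∨ c = b ∧ d = a := by
  simpa [List.ofFn_succ, List.perm_pair] using ht.map_univ_eq_of_ne_zero h

theorem apply_pair (ht : IsGLInvariant t) (a b c d K M : Fin n) :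
    (if c = M then t ![a, b] ![K, d] else 0) + (if d = M then t ![a, b] ![c, K] else 0) =
      (if a = K then t ![M, b] ![c, d] else 0) + (if b = K then t ![a, M] ![c, d] else 0) := by
  simpa [Fin.sum_univ_two, update_vecCons_two_zero, update_vecCons_two_one] using
    ht K M ![a, b] ![c, d]

theorem add_swap_eq_diag_left (ht : IsGLInvariant t) {a b : Fin n} (hab : a ≠ b) :
    t ![a, b] ![a, b] + t ![a, b] ![b, a] = t ![a, a] ![a, a] := by
  simpa [hab, Ne.symm hab, add_comm] using ht.apply_pair a b a a b a

theorem add_swap_eq_diag_right (ht : IsGLInvariant t) {a b : Fin n} (hab : a ≠ b) :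
    t ![a, b] ![a, b] + t ![a, b] ![b, a] = t ![b, b] ![b, b] := by
  simpa [hab, Ne.symm hab] using ht.apply_pair a b b b a b

theorem apply_diag (ht : IsGLInvariant t) (a b : Fin n) :
    t ![a, a] ![a, a] = t ![b, b] ![b, b] := by
  by_cases hab : a = b
  · rw [hab]
  · exact (ht.add_swap_eq_diag_left hab).symm.trans (ht.add_swap_eq_diag_right hab)

theorem apply_swap (ht : IsGLInvariant t) {a b : Fin n} (hab : a ≠ b) :
    t ![b, a] ![b, a] = t ![a, b] ![a, b] := by
  have h := ht.apply_pair a a a b a b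
  simp only [hab, ↓reduceIte, zero_add] at h
  linear_combination ht.add_swap_eq_diag_left (Ne.symm hab) + ht.apply_diag b a + h

theorem apply_eq_of_ne (ht : IsGLInvariant t) {a b c : Fin n} (hab : a ≠ b) (hac : a ≠ c) :
    t ![a, b] ![a, b] = t ![a, c] ![a, c] := by
  simpa [hab, hac, Ne.symm hab, Ne.symm hac] using ht.apply_pair a b a c b c

theorem apply_eq_kron_of_ne (ht : IsGLInvariant t) {u v : Fin n} (huv : u ≠ v) (a b c d : Fin n) :
    t ![a, b] ![c, d] = t ![u, v] ![u, v] * (kron a c * kron b d)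
      + t ![u, v] ![v, u] * (kron a d * kron b c) := by
  have hc₁ : ∀ a b, a ≠ b → t ![a, b] ![a, b] = t ![u, v] ![u, v] := fun a b hab =>
    eq_of_symm_of_eq_right (f := fun a b => t ![a, b] ![a, b]) (fun _ _ => ht.apply_swap)
      (fun _ _ _ => ht.apply_eq_of_ne) hab huv
  have hd : ∀ a, t ![a, a] ![a, a] = t ![u, v] ![u, v] + t ![u, v] ![v, u] := fun a =>
    (ht.apply_diag a u).trans (ht.add_swap_eq_diag_left huv).symm
  have hc₂ : ∀ a b, a ≠ b → t ![a, b] ![b, a] = t ![u, v] ![v, u] := by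
    intro a b hab
    linear_combination ht.add_swap_eq_diag_left hab + hd a - hc₁ a b hab
  by_cases h₁ : c = a ∧ d = b
  · obtain ⟨rfl, rfl⟩ := h₁
    by_cases hcd : c = d
    · subst hcd
      simp [kron, hd]
    · simp [kron, hcd, hc₁ c d hcd]
  by_cases h₂ : c = b ∧ d = a
  · obtain ⟨rfl, rfl⟩ := h₂
    have hdc : d ≠ c := fun h => h₁ ⟨h.symm, h⟩
    simp [kron, hdc, Ne.symm hdc, hc₂ d c hdc]
  have h₀ : t ![a, b] ![c, d] = 0 := by
    by_contra h
    exact (ht.eq_or_eq_swap_of_ne_zero h).elim h₁ h₂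
  simp only [kron, h₀]
  split_ifs <;> simp_all

theorem exists_eq_kron (ht : IsGLInvariant t) : ∃ c₁ c₂ : ℂ, ∀ i j : Fin 2 → Fin n,
    t i j = c₁ * (kron (i 0) (j 0) * kron (i 1) (j 1))
      + c₂ * (kron (i 0) (j 1) * kron (i 1) (j 0)) := by
  rcases subsingleton_or_nontrivial (Fin n) with _ | _
  · rcases isEmpty_or_nonempty (Fin n) with _ | ⟨⟨e⟩⟩
    · exact ⟨0, 0, fun i => isEmptyElim (i 0)⟩
    · refine ⟨t ![e, e] ![e, e], 0, fun i j => ?_⟩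
      rw [Subsingleton.elim i ![e, e], Subsingleton.elim j ![e, e]]
      simp [kron]
  · obtain ⟨u, v, huv⟩ := exists_pair_ne (Fin n)
    refine ⟨t ![u, v] ![u, v], t ![u, v] ![v, u], fun i j => ?_⟩
    rw [← vecCons_two_eta i, ← vecCons_two_eta j, ht.apply_eq_kron_of_ne huv]
    simp

end IsGLInvariant

/-- A type-`(2,2)` tensor field on `ℂⁿ` whose Lie derivative vanishes
along every analytic vector field is a constant combination
`c₁ δ^{i₁}_{j₁} δ^{i₂}_{j₂} + c₂ δ^{i₁}_{j₂} δ^{i₂}_{j₁}`. -/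
theorem trivial_tensor_invariant_two_two {n : ℕ}
    (T : (Fin 2 → Fin n) → (Fin 2 → Fin n) → (Fin n → ℂ) → ℂ)
    (hTan : ∀ i j, AnalyticOnNhd ℂ (T i j) Set.univ)
    (htriv : ∀ F : Fin n → (Fin n → ℂ) → ℂ,
      (∀ s, AnalyticOnNhd ℂ (F s) Set.univ) →
      ∀ i j x, lieDeriv F T i j x = 0) :
    ∃ c₁ c₂ : ℂ, ∀ (i j : Fin 2 → Fin n) (x : Fin n → ℂ),
      T i j x = c₁ * (kron (i 0) (j 0) * kron (i 1) (j 1))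
        + c₂ * (kron (i 0) (j 1) * kron (i 1) (j 0)) := by
  have hconst : ∀ i j x, T i j x = T i j 0 := fun i j x =>
    eq_of_pderivC_eq_zero (differentiableOn_univ.mp (hTan i j).differentiableOn)
      (fun K y => (lieDeriv_const_single K T i j y).symm.trans
        (htriv _ (fun _ => analyticOnNhd_const) i j y)) x 0
  have hinv : IsGLInvariant fun i j => T i j 0 := fun K M i j =>
    sub_eq_zero.mp <| (lieDeriv_linearField_zero K M T i j).symm.trans
      (htriv _ (analyticOnNhd_linearField K M) i j 0)
  obtain ⟨c₁, c₂, hc⟩ := hinv.exists_eq_kron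
  exact ⟨c₁, c₂, fun i j x => (hconst i j x).trans (hc i j)⟩
end

section
/- Let F(x₁,x₂) = (x₁, √2·x₂) be the vector field of the linear system ẋ₁ = x₁, ẋ₂ = √2·x₂ on ℂ², and let p, q be nonnegative integers with q > p. Then every analytic tensor invariant T of type (p,q) of this system in a neighbourhood of the origin is identically zero. -/
open scoped BigOperators

/-- The vector field of the linear system `ẋ₁ = x₁, ẋ₂ = √2·x₂` on `ℂ²`. -/
noncomputable def Fex : Fin 2 → (Fin 2 → ℂ) → ℂ :=
  ![fun x => x 0, fun x => (Real.sqrt 2 : ℂ) * x 1]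

/-! The field is diagonal with eigenvalues `μ = (1, √2)`, so the invariance equation for a
component `T^i_j` reads `E T = c T`, where `E = Σ μ_k x_k ∂_k` and
`c = Σ_b μ(i_b) - Σ_a μ(j_a)`. Since `[∂_k, E] = μ_k ∂_k`, every partial derivative `∂^α T`
satisfies the same equation with `c` replaced by `c - ⟨α, μ⟩`; as `E` vanishes at the origin,
`(c - ⟨α, μ⟩) ∂^α T(0) = 0`. By the irrationality of `√2`, `c = ⟨α, μ⟩` would force
`p = q + |α|`, so all Taylor coefficients of `T` at `0` vanish and `T ≡ 0` on `U` by the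
identity theorem. -/

open Filter Topology

section Calculus

variable {n : ℕ}

theorem analyticAt_pderivC {f : (Fin n → ℂ) → ℂ} {x : Fin n → ℂ} (hf : AnalyticAt ℂ f x)
    (k : Fin n) : AnalyticAt ℂ (fun y => pderivC f k y) x :=
  ((ContinuousLinearMap.apply ℂ ℂ (Pi.single k (1 : ℂ))).analyticAt _).fun_comp hf.fderiv

theorem analyticOnNhd_pderivC {U : Set (Fin n → ℂ)} {f : (Fin n → ℂ) → ℂ}
    (hf : AnalyticOnNhd ℂ f U) (k : Fin n) : AnalyticOnNhd ℂ (fun y => pderivC f k y) U :=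
  fun x hx => analyticAt_pderivC (hf x hx) k

theorem pderivC_mul {f g : (Fin n → ℂ) → ℂ} {x : Fin n → ℂ} (hf : DifferentiableAt ℂ f x)
    (hg : DifferentiableAt ℂ g x) (k : Fin n) :
    pderivC (fun y => f y * g y) k x = pderivC f k x * g x + f x * pderivC g k x := by
  simp only [pderivC, fderiv_fun_mul hf hg, add_apply, smul_apply, smul_eq_mul]
  ring

theorem pderivC_sum {ι : Type*} (s : Finset ι) {f : ι → (Fin n → ℂ) → ℂ} {x : Fin n → ℂ}
    (hf : ∀ i ∈ s, DifferentiableAt ℂ (f i) x) (k : Fin n) :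
    pderivC (fun y => ∑ i ∈ s, f i y) k x = ∑ i ∈ s, pderivC (f i) k x := by
  simp [pderivC, fderiv_fun_sum hf]

theorem pderivC_const_mul_apply (c : ℂ) (s k : Fin n) (x : Fin n → ℂ) :
    pderivC (fun y => c * y s) k x = if s = k then c else 0 := by
  have h : HasFDerivAt (fun y : Fin n → ℂ => c * y s) (c • ContinuousLinearMap.proj s) x :=
    (ContinuousLinearMap.proj (R := ℂ) (φ := fun _ : Fin n => ℂ) s).hasFDerivAt.const_mul c
  simp [pderivC, h.fderiv, Pi.single_apply]

theorem AnalyticAt.pderivC_comm {f : (Fin n → ℂ) → ℂ} {x : Fin n → ℂ} (hf : AnalyticAt ℂ f x)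
    (k l : Fin n) :
    pderivC (fun y => pderivC f k y) l x = pderivC (fun y => pderivC f l y) k x := by
  have hd : DifferentiableAt ℂ (fderiv ℂ f) x := hf.fderiv.differentiableAt
  have key : ∀ k l, pderivC (fun y => pderivC f k y) l x
      = fderiv ℂ (fderiv ℂ f) x (Pi.single l 1) (Pi.single k 1) := fun k l => by
    simp [pderivC, fderiv_clm_apply hd (differentiableAt_const _)]
  rw [key, key, hf.contDiffAt.isSymmSndFDerivAt_of_omega]

end Calculus

section DiagonalField

variable {n : ℕ} (μ : Fin n → ℂ)

noncomputable def diagField : Fin n → (Fin n → ℂ) → ℂ := fun k x => μ k * x k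

noncomputable def eulerOp (f : (Fin n → ℂ) → ℂ) (x : Fin n → ℂ) : ℂ :=
  ∑ s, diagField μ s x * pderivC f s x

theorem pderivC_diagField (k l : Fin n) (x : Fin n → ℂ) :
    pderivC (diagField μ k) l x = if k = l then μ k else 0 :=
  pderivC_const_mul_apply (μ k) k l x

theorem lieDeriv_diagField {p q : ℕ} (T : (Fin p → Fin n) → (Fin q → Fin n) → (Fin n → ℂ) → ℂ)
    (i : Fin p → Fin n) (j : Fin q → Fin n) (x : Fin n → ℂ) :
    lieDeriv (diagField μ) T i j x
      = eulerOp μ (T i j) x - (∑ b, μ (i b) - ∑ a, μ (j a)) * T i j x := by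
  simp only [lieDeriv, eulerOp, pderivC_diagField, mul_ite, mul_zero, Finset.sum_ite_eq,
    Finset.sum_ite_eq', Finset.mem_univ, if_true, Function.update_eq_self, ← Finset.mul_sum]
  ring

theorem pderivC_eulerOp {f : (Fin n → ℂ) → ℂ} {x : Fin n → ℂ} (hf : AnalyticAt ℂ f x)
    (k : Fin n) :
    pderivC (eulerOp μ f) k x = eulerOp μ (fun y => pderivC f k y) x + μ k * pderivC f k x := by
  have hdiff : ∀ s, DifferentiableAt ℂ (diagField μ s) x := fun s => by
    unfold diagField; fun_prop
  have hdiff' : ∀ s, DifferentiableAt ℂ (fun y => pderivC f s y) x := fun s =>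
    (analyticAt_pderivC hf s).differentiableAt
  unfold eulerOp
  rw [pderivC_sum (f := fun s y => diagField μ s y * pderivC f s y) _
    fun s _ => (hdiff s).mul (hdiff' s)]
  simp only [pderivC_mul (hdiff _) (hdiff' _), pderivC_diagField, ite_mul, zero_mul,
    Finset.sum_add_distrib, Finset.sum_ite_eq', Finset.mem_univ, if_true, hf.pderivC_comm]
  simp only [diagField]
  ring

theorem eulerOp_pderivC_of_eqOn {U : Set (Fin n → ℂ)} (hU : IsOpen U) {f : (Fin n → ℂ) → ℂ}
    (hf : AnalyticOnNhd ℂ f U) {c : ℂ} (heq : ∀ x ∈ U, eulerOp μ f x = c * f x) (k : Fin n) :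
    ∀ x ∈ U, eulerOp μ (fun y => pderivC f k y) x = (c - μ k) * pderivC f k x := by
  intro x hx
  have hev : eulerOp μ f =ᶠ[𝓝 x] fun y => c * f y :=
    Filter.eventually_of_mem (hU.mem_nhds hx) heq
  have h := pderivC_eulerOp μ (hf x hx) k
  rw [pderivC, hev.fderiv_eq, ← pderivC, pderivC_mul (differentiableAt_const c)
    (hf x hx).differentiableAt] at h
  have hconst : pderivC (fun _ => c) k x = 0 := by simp [pderivC]
  rw [hconst, zero_mul, zero_add] at h
  linear_combination -h

end DiagonalField

section IteratedPDeriv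

variable {n : ℕ}

noncomputable def iteratedPDeriv :
    {m : ℕ} → (Fin m → Fin n) → ((Fin n → ℂ) → ℂ) → (Fin n → ℂ) → ℂ
  | 0, _, f => f
  | _ + 1, v, f => pderivC (iteratedPDeriv (Fin.tail v) f) (v 0)

theorem analyticOnNhd_iteratedPDeriv {U : Set (Fin n → ℂ)} {f : (Fin n → ℂ) → ℂ}
    (hf : AnalyticOnNhd ℂ f U) : ∀ {m : ℕ} (v : Fin m → Fin n),
      AnalyticOnNhd ℂ (iteratedPDeriv v f) U
  | 0, _ => hf
  | _ + 1, v => analyticOnNhd_pderivC (analyticOnNhd_iteratedPDeriv hf (Fin.tail v)) (v 0)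

theorem iteratedFDeriv_apply_single {U : Set (Fin n → ℂ)} (hU : IsOpen U)
    {f : (Fin n → ℂ) → ℂ} (hf : AnalyticOnNhd ℂ f U) :
    ∀ {m : ℕ} (v : Fin m → Fin n), ∀ x ∈ U,
      iteratedFDeriv ℂ m f x (fun s => Pi.single (v s) (1 : ℂ)) = iteratedPDeriv v f x
  | 0, _, x, _ => by simp [iteratedPDeriv]
  | m + 1, v, x, hx => by
    have hev : (fun y => iteratedFDeriv ℂ m f y (fun s => Pi.single (Fin.tail v s) 1))
        =ᶠ[𝓝 x] iteratedPDeriv (Fin.tail v) f :=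
      Filter.eventually_of_mem (hU.mem_nhds hx) (iteratedFDeriv_apply_single hU hf _)
    have hdiff : DifferentiableAt ℂ (iteratedFDeriv ℂ m f) x :=
      ((hf.iteratedFDeriv m) x hx).differentiableAt
    rw [iteratedFDeriv_succ_apply_left, ← fderiv_continuousMultilinear_apply_const_apply hdiff]
    exact DFunLike.congr_fun hev.fderiv_eq _

theorem iteratedFDeriv_eq_zero_of_iteratedPDeriv_eq_zero {U : Set (Fin n → ℂ)} (hU : IsOpen U)
    {f : (Fin n → ℂ) → ℂ} (hf : AnalyticOnNhd ℂ f U) {x : Fin n → ℂ} (hx : x ∈ U) {m : ℕ}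
    (h : ∀ v : Fin m → Fin n, iteratedPDeriv v f x = 0) : iteratedFDeriv ℂ m f x = 0 := by
  refine ContinuousMultilinearMap.toMultilinearMap_injective
    (Module.Basis.ext_multilinear (fun _ => Pi.basisFun ℂ (Fin n)) fun v => ?_)
  simpa [← h v] using iteratedFDeriv_apply_single hU hf v x hx

end IteratedPDeriv

theorem AnalyticOnNhd.eqOn_zero_of_iteratedFDeriv_eq_zero {𝕜 E F : Type*}
    [NontriviallyNormedField 𝕜] [CharZero 𝕜] [NormedAddCommGroup E] [NormedSpace 𝕜 E]
    [NormedAddCommGroup F] [NormedSpace 𝕜 F] [CompleteSpace F] {U : Set E} {f : E → F} {x₀ : E}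
    (hf : AnalyticOnNhd 𝕜 f U) (hU : IsPreconnected U) (hx₀ : x₀ ∈ U)
    (h : ∀ m, iteratedFDeriv 𝕜 m f x₀ = 0) : Set.EqOn f 0 U := by
  obtain ⟨P, r, hP⟩ := hf x₀ hx₀
  have hball : ∀ y ∈ Metric.eball (0 : E) r, f (x₀ + y) = 0 := fun y hy =>
    (hP.hasSum_iteratedFDeriv hy).unique (by simp [h, hasSum_zero])
  refine hf.eqOn_zero_of_preconnected_of_eventuallyEq_zero hU hx₀ ?_
  have hsub : Tendsto (fun y => y - x₀) (𝓝 x₀) (𝓝 0) :=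
    (continuous_sub_right x₀).tendsto' x₀ 0 (sub_self x₀)
  filter_upwards [hsub (Metric.eball_mem_nhds 0 hP.r_pos)] with y hy
  simpa using hball _ hy

section Resonance

variable {n : ℕ} (μ : Fin n → ℂ) {U : Set (Fin n → ℂ)} {f : (Fin n → ℂ) → ℂ} {c : ℂ}

theorem eulerOp_apply_zero (g : (Fin n → ℂ) → ℂ) : eulerOp μ g 0 = 0 := by
  simp [eulerOp, diagField]

theorem eulerOp_iteratedPDeriv_of_eqOn (hU : IsOpen U) (hf : AnalyticOnNhd ℂ f U)
    (heq : ∀ x ∈ U, eulerOp μ f x = c * f x) : ∀ {m : ℕ} (v : Fin m → Fin n), ∀ x ∈ U,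
      eulerOp μ (iteratedPDeriv v f) x = (c - ∑ s, μ (v s)) * iteratedPDeriv v f x
  | 0, _ => by simpa [iteratedPDeriv] using heq
  | m + 1, v => by
    intro x hx
    rw [Fin.sum_univ_succ, sub_add_eq_sub_sub_swap]
    exact eulerOp_pderivC_of_eqOn μ hU (analyticOnNhd_iteratedPDeriv hf _)
      (eulerOp_iteratedPDeriv_of_eqOn hU hf heq (Fin.tail v)) (v 0) x hx

theorem eqOn_zero_of_eulerOp_eq_mul (hU : IsOpen U) (hUconn : IsPreconnected U)
    (h0 : (0 : Fin n → ℂ) ∈ U) (hf : AnalyticOnNhd ℂ f U)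
    (hc : ∀ (m : ℕ) (v : Fin m → Fin n), c ≠ ∑ s, μ (v s))
    (heq : ∀ x ∈ U, eulerOp μ f x = c * f x) : Set.EqOn f 0 U := by
  refine hf.eqOn_zero_of_iteratedFDeriv_eq_zero hUconn h0 fun m =>
    iteratedFDeriv_eq_zero_of_iteratedPDeriv_eq_zero hU hf h0 fun v => ?_
  have h := eulerOp_iteratedPDeriv_of_eqOn μ hU hf heq v 0 h0
  rw [eulerOp_apply_zero, eq_comm, mul_eq_zero] at h
  exact h.resolve_left (sub_ne_zero.mpr (hc m v))

end Resonance

section SqrtTwo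

open Finset

theorem natCast_add_mul_sqrt_two_injective {a b a' b' : ℕ}
    (h : (a : ℂ) + b * (√2 : ℝ) = a' + b' * (√2 : ℝ)) : a = a' ∧ b = b' := by
  have hR : (a : ℝ) + b * √2 = a' + b' * √2 := by exact_mod_cast h
  have hb : b = b' := by
    by_contra hne
    have hirr : Irrational (√2 * ((b - b' : ℤ) : ℝ)) :=
      irrational_sqrt_two.mul_intCast (sub_ne_zero.mpr (by exact_mod_cast hne))
    exact hirr.ne_int (a' - a) (by push_cast; linarith)
  subst hb
  exact ⟨by exact_mod_cast (by linarith : (a : ℝ) = a'), rfl⟩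

theorem sum_comp_fin_two {ι M : Type*} [Fintype ι] [AddCommMonoid M] (w : ι → Fin 2)
    (g : Fin 2 → M) : ∑ s, g (w s) = #{s | w s = 0} • g 0 + #{s | w s = 1} • g 1 := by
  rw [← Finset.sum_fiberwise' Finset.univ w, Fin.sum_univ_two]
  simp only [Finset.sum_const]

theorem card_eq_card_filter_add_card_filter_fin_two {ι : Type*} [Fintype ι] (w : ι → Fin 2) :
    Fintype.card ι = #{s | w s = 0} + #{s | w s = 1} := by
  simpa using sum_comp_fin_two w fun _ => (1 : ℕ)

noncomputable def sqrtTwoWeights : Fin 2 → ℂ := ![1, (Real.sqrt 2 : ℂ)]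

theorem Fex_eq_diagField : Fex = diagField sqrtTwoWeights := by
  funext k x
  fin_cases k <;> simp [Fex, diagField, sqrtTwoWeights]

theorem card_eq_of_sum_sqrtTwoWeights_eq {ι κ : Type*} [Fintype ι] [Fintype κ] (w : ι → Fin 2)
    (w' : κ → Fin 2) (h : ∑ s, sqrtTwoWeights (w s) = ∑ t, sqrtTwoWeights (w' t)) :
    Fintype.card ι = Fintype.card κ := by
  simp only [sum_comp_fin_two, sqrtTwoWeights, nsmul_eq_mul, Matrix.cons_val_zero,
    Matrix.cons_val_one, mul_one] at h
  obtain ⟨h0, h1⟩ := natCast_add_mul_sqrt_two_injective h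
  rw [card_eq_card_filter_add_card_filter_fin_two w,
    card_eq_card_filter_add_card_filter_fin_two w', h0, h1]

theorem sum_sqrtTwoWeights_sub_ne {p q m : ℕ} (hpq : p < q) (i : Fin p → Fin 2)
    (j : Fin q → Fin 2) (v : Fin m → Fin 2) :
    ∑ b, sqrtTwoWeights (i b) - ∑ a, sqrtTwoWeights (j a) ≠ ∑ s, sqrtTwoWeights (v s) := by
  intro h
  have hsum : ∑ b, sqrtTwoWeights (i b) = ∑ t, sqrtTwoWeights (Fin.append j v t) := by
    rw [Fin.sum_univ_add, ← sub_eq_iff_eq_add']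
    simpa using h
  have := card_eq_of_sum_sqrtTwoWeights_eq i (Fin.append j v) hsum
  rw [Fintype.card_fin, Fintype.card_fin] at this
  omega

end SqrtTwo

/-- For `q > p`, the system `ẋ₁ = x₁, ẋ₂ = √2·x₂` admits no nonzero
analytic tensor invariant of type `(p,q)` near the origin of `ℂ²`. -/
theorem no_pq_invariant_of_sqrt2_system {p q : ℕ} (hpq : p < q)
    (U : Set (Fin 2 → ℂ)) (hU : IsOpen U) (hUconn : IsPreconnected U)
    (h0 : (0 : Fin 2 → ℂ) ∈ U)
    (T : (Fin p → Fin 2) → (Fin q → Fin 2) → (Fin 2 → ℂ) → ℂ)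
    (hTan : ∀ i j, AnalyticOnNhd ℂ (T i j) U)
    (hinv : ∀ i j, ∀ x ∈ U, lieDeriv Fex T i j x = 0) :
    ∀ i j, ∀ x ∈ U, T i j x = 0 := by
  intro i j
  refine eqOn_zero_of_eulerOp_eq_mul sqrtTwoWeights hU hUconn h0 (hTan i j)
    (fun _ v => sum_sqrtTwoWeights_sub_ne hpq i j v) fun x hx => ?_
  have h := hinv i j x hx
  rw [Fex_eq_diagField, lieDeriv_diagField] at h
  exact sub_eq_zero.mp h
end
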